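/- In a Boolean set X → B with operations x ∘ y = y|^{p(y)}_{p(x)∧p(y)} and x • y = x ∨ (y \ x), the following are equivalent: (1) x ∼ y; (2) x ∘ y = y ∘ x; (3) x • y = y • x. -/
import Mathlib


/-- A presheaf of sets over a meet-semilattice `E`: a carrier `X` with projection
`p : X → E` and restriction maps `res x f h : X` for `f ≤ p x`, satisfying the
identity and composition laws. -/
structure PresheafOfSets (E : Type*) [SemilatticeInf E] where
  X : Type*
  p : X → E
  res : ∀ x : X, ∀ f : E, f ≤ p x → X
  p_res : ∀ x f h, p (res x f h) = f
  res_self : ∀ x, res x (p x) le_rfl = x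
  res_comp : ∀ x f g (hf : f ≤ p x) (_ : g ≤ f) (hg : g ≤ p x)
      (hg' : g ≤ p (res x f hf)), res (res x f hf) g hg' = res x g hg

namespace PresheafOfSets

variable {E : Type*} [SemilatticeInf E] (P : PresheafOfSets E)

/-- The natural partial order: `x ≤ y` iff `x` is the restriction of `y` to `p x`. -/
def le (x y : P.X) : Prop := ∃ h : P.p x ≤ P.p y, x = P.res y (P.p x) h

/-- The right normal band operation `x ∘ y = y|^{p y}_{p x ⊓ p y}`. -/
def circ (x y : P.X) : P.X := P.res y (P.p x ⊓ P.p y) inf_le_right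

/-- `m` is the meet of `x` and `y` with respect to the natural partial order. -/
def IsMeet (m x y : P.X) : Prop :=
  P.le m x ∧ P.le m y ∧ ∀ z, P.le z x → P.le z y → P.le z m

/-- `j` is the join of `x` and `y` with respect to the natural partial order. -/
def IsJoin (j x y : P.X) : Prop :=
  P.le x j ∧ P.le y j ∧ ∀ z, P.le x z → P.le y z → P.le j z

/-- `x ∼ y`: the meet `x ∧ y` exists and `p (x ∧ y) = p x ⊓ p y`. -/
def Compatible (x y : P.X) : Prop :=
  ∃ m, P.IsMeet m x y ∧ P.p m = P.p x ⊓ P.p y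

end PresheafOfSets

/-- A Boolean set: a presheaf of sets with global support over a generalized Boolean
algebra `B`, with a minimum element `zero`, joins of compatible pairs, and such that
`p x = ⊥` implies `x = zero`. -/
structure BooleanSet (B : Type*) [GeneralizedBooleanAlgebra B] extends PresheafOfSets B where
  p_surj : Function.Surjective toPresheafOfSets.p
  zero : toPresheafOfSets.X
  zero_le : ∀ x, toPresheafOfSets.le zero x
  eq_zero : ∀ x, toPresheafOfSets.p x = ⊥ → x = zero
  join_exists : ∀ x y, toPresheafOfSets.Compatible x y →
    ∃ j, toPresheafOfSets.IsJoin j x y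

namespace BooleanSet

variable {B : Type*} [GeneralizedBooleanAlgebra B] (S : BooleanSet B)

/-- `y \ x = y|^{p y}_{p y \ p x}`. -/
def minus (y x : S.X) : S.X := S.res y (S.p y \ S.p x) sdiff_le

end BooleanSet

namespace PresheafOfSets

variable {E : Type*} [SemilatticeInf E] (P : PresheafOfSets E)

theorem res_eq_of_eq {x : P.X} {f g : E} (h : f = g) (hf : f ≤ P.p x) (hg : g ≤ P.p x) :
    P.res x f hf = P.res x g hg := by subst h; rfl

theorem res_congr_base {y y' : P.X} (h : y = y') (f : E) (hf : f ≤ P.p y) (hf' : f ≤ P.p y') :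
    P.res y f hf = P.res y' f hf' := by subst h; rfl

theorem le_refl' (x : P.X) : P.le x x := ⟨le_rfl, (P.res_self x).symm⟩

theorem res_le (x : P.X) (f : E) (hf : f ≤ P.p x) : P.le (P.res x f hf) x :=
  ⟨(P.p_res x f hf).le.trans hf, (P.res_eq_of_eq (P.p_res x f hf) _ hf).symm⟩

theorem le_trans' {x y z : P.X} (hxy : P.le x y) (hyz : P.le y z) : P.le x z := by
  obtain ⟨h1, e1⟩ := hxy
  obtain ⟨h2, e2⟩ := hyz
  refine ⟨h1.trans h2, ?_⟩
  calc x = P.res y (P.p x) h1 := e1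
    _ = P.res (P.res z (P.p y) h2) (P.p x) (by rw [P.p_res]; exact h1) :=
        P.res_congr_base e2 _ _ _
    _ = P.res z (P.p x) (h1.trans h2) := P.res_comp z (P.p y) (P.p x) h2 h1 _ _

theorem le_antisymm' {x y : P.X} (hxy : P.le x y) (hyx : P.le y x) : x = y := by
  obtain ⟨h1, e1⟩ := hxy
  have hp : P.p x = P.p y := le_antisymm h1 hyx.1
  calc x = P.res y (P.p x) h1 := e1
    _ = P.res y (P.p y) le_rfl := P.res_eq_of_eq hp _ _
    _ = y := P.res_self y

theorem le_res {z x : P.X} {f : E} (hz : P.le z x) (h1 : P.p z ≤ f) (h2 : f ≤ P.p x) :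
    P.le z (P.res x f h2) := by
  refine ⟨by rw [P.p_res]; exact h1, ?_⟩
  obtain ⟨hz1, ez⟩ := hz
  calc z = P.res x (P.p z) hz1 := ez
    _ = P.res (P.res x f h2) (P.p z) (by rw [P.p_res]; exact h1) :=
        (P.res_comp x f (P.p z) h2 h1 hz1 _).symm

theorem isMeet_res (x : P.X) (f g : E) (hf : f ≤ P.p x) (hg : g ≤ P.p x) :
    P.IsMeet (P.res x (f ⊓ g) (inf_le_left.trans hf)) (P.res x f hf) (P.res x g hg) := by
  refine ⟨?_, ?_, ?_⟩
  · exact P.le_res (P.res_le x (f ⊓ g) _) (by rw [P.p_res]; exact inf_le_left) hf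
  · exact P.le_res (P.res_le x (f ⊓ g) _) (by rw [P.p_res]; exact inf_le_right) hg
  · intro z hzf hzg
    have hzx : P.le z x := P.le_trans' hzf (P.res_le x f hf)
    have h1 : P.p z ≤ f := hzf.1.trans (P.p_res x f hf).le
    have h2 : P.p z ≤ g := hzg.1.trans (P.p_res x g hg).le
    exact P.le_res hzx (le_inf h1 h2) _

theorem isJoin_unique {j1 j2 x y : P.X} (h1 : P.IsJoin j1 x y) (h2 : P.IsJoin j2 x y) :
    j1 = j2 :=
  P.le_antisymm' (h1.2.2 j2 h2.1 h2.2.1) (h2.2.2 j1 h1.1 h1.2.1)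

theorem compatible_symm {x y : P.X} (h : P.Compatible x y) : P.Compatible y x := by
  obtain ⟨m, ⟨h1, h2, h3⟩, hp⟩ := h
  exact ⟨m, ⟨h2, h1, fun z za zb => h3 z zb za⟩, hp.trans (inf_comm _ _)⟩

end PresheafOfSets

namespace BooleanSet

variable {B : Type*} [GeneralizedBooleanAlgebra B] (S : BooleanSet B)

theorem p_zero : S.p S.zero = ⊥ := by
  obtain ⟨x0, hx0⟩ := S.p_surj ⊥
  exact le_bot_iff.mp (hx0 ▸ (S.zero_le x0).1)

theorem p_minus (y x : S.X) : S.p (S.minus y x) = S.p y \ S.p x := S.p_res _ _ _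

theorem compatible_minus (x y : S.X) : S.Compatible x (S.minus y x) := by
  refine ⟨S.zero, ⟨S.zero_le x, S.zero_le _, ?_⟩, ?_⟩
  · intro z hzx hzm
    have hz : S.p z ≤ ⊥ := by
      have h1 : S.p z ≤ S.p x := hzx.1
      have h2 : S.p z ≤ S.p y \ S.p x := hzm.1.trans (S.p_minus y x).le
      calc S.p z ≤ S.p x ⊓ S.p y \ S.p x := le_inf h1 h2
        _ = ⊥ := inf_sdiff_self_right
    have hz0 : z = S.zero := S.eq_zero z (le_bot_iff.mp hz)
    rw [hz0]; exact S.zero_le S.zero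
  · rw [S.p_zero, S.p_minus, inf_sdiff_self_right]

noncomputable def bullet (x y : S.X) : S.X :=
  (S.join_exists x (S.minus y x) (S.compatible_minus x y)).choose

theorem isJoin_bullet (x y : S.X) : S.IsJoin (S.bullet x y) x (S.minus y x) :=
  (S.join_exists x (S.minus y x) (S.compatible_minus x y)).choose_spec

theorem glue {z1 z2 : S.X} {a b : B} (hp : S.p z1 = S.p z2) (hab : a ⊔ b = S.p z1)
    (ha1 : a ≤ S.p z1) (hb1 : b ≤ S.p z1) (ha2 : a ≤ S.p z2) (hb2 : b ≤ S.p z2)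
    (ha : S.res z1 a ha1 = S.res z2 a ha2) (hb : S.res z1 b hb1 = S.res z2 b hb2) :
    z1 = z2 := by
  have hm := S.toPresheafOfSets.isMeet_res z1 a b ha1 hb1
  have hc : S.Compatible (S.res z1 a ha1) (S.res z1 b hb1) :=
    ⟨_, hm, by rw [S.p_res, S.p_res, S.p_res]⟩
  obtain ⟨j, hj⟩ := S.join_exists _ _ hc
  have hj1 : S.le j z1 :=
    hj.2.2 z1 (S.toPresheafOfSets.res_le z1 a ha1) (S.toPresheafOfSets.res_le z1 b hb1)
  have hj2 : S.le j z2 := by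
    refine hj.2.2 z2 ?_ ?_
    · rw [ha]; exact S.toPresheafOfSets.res_le z2 a ha2
    · rw [hb]; exact S.toPresheafOfSets.res_le z2 b hb2
  have hpj : S.p j = S.p z1 := by
    refine le_antisymm hj1.1 ?_
    rw [← hab]
    refine sup_le ?_ ?_
    · exact (S.p_res z1 a ha1) ▸ hj.1.1
    · exact (S.p_res z1 b hb1) ▸ hj.2.1.1
  have e1 : j = z1 := by
    calc j = S.res z1 (S.p j) hj1.1 := hj1.2
      _ = S.res z1 (S.p z1) le_rfl := S.toPresheafOfSets.res_eq_of_eq hpj _ _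
      _ = z1 := S.res_self z1
  have e2 : j = z2 := by
    calc j = S.res z2 (S.p j) hj2.1 := hj2.2
      _ = S.res z2 (S.p z2) le_rfl := S.toPresheafOfSets.res_eq_of_eq (hpj.trans hp) _ _
      _ = z2 := S.res_self z2
  rw [← e1, e2]

theorem compat_iff_circ (x y : S.X) : S.Compatible x y ↔ S.circ x y = S.circ y x := by
  constructor
  · rintro ⟨m, ⟨hmx, hmy, -⟩, hpm⟩
    have e1 : m = S.circ x y :=
      hmy.2.trans (S.toPresheafOfSets.res_eq_of_eq hpm _ inf_le_right)
    have e2 : m = S.circ y x :=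
      hmx.2.trans (S.toPresheafOfSets.res_eq_of_eq (hpm.trans (inf_comm _ _)) _ inf_le_right)
    exact e1.symm.trans e2
  · intro h
    refine ⟨S.circ x y, ⟨?_, ?_, ?_⟩, S.p_res _ _ _⟩
    · rw [h]; exact S.toPresheafOfSets.res_le x _ _
    · exact S.toPresheafOfSets.res_le y _ _
    · intro z hzx hzy
      exact S.toPresheafOfSets.le_res hzy (le_inf hzx.1 hzy.1) inf_le_right

theorem isJoin_bullet_of_compatible {x y : S.X} (h : S.Compatible x y) :
    S.IsJoin (S.bullet x y) x y := by
  obtain ⟨m, ⟨hmx, hmy, -⟩, hpm⟩ := h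
  have hj := S.isJoin_bullet x y
  have hx : S.le x (S.bullet x y) := hj.1
  have hyx : S.le (S.minus y x) (S.bullet x y) := hj.2.1
  have hpy : S.p y ≤ S.p (S.bullet x y) := by
    have h1 : S.p y ⊓ S.p x ≤ S.p (S.bullet x y) := inf_le_right.trans hx.1
    have h2 : S.p y \ S.p x ≤ S.p (S.bullet x y) := (S.p_minus y x) ▸ hyx.1
    calc S.p y = S.p y ⊓ S.p x ⊔ S.p y \ S.p x := (sup_inf_sdiff (S.p y) (S.p x)).symm
      _ ≤ S.p (S.bullet x y) := sup_le h1 h2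
  have hmj : S.le m (S.bullet x y) := S.toPresheafOfSets.le_trans' hmx hx
  have key : y = S.res (S.bullet x y) (S.p y) hpy := by
    refine S.glue (by rw [S.p_res]) (sup_inf_sdiff (S.p y) (S.p x)) inf_le_left sdiff_le
      (by rw [S.p_res]; exact inf_le_left) (by rw [S.p_res]; exact sdiff_le) ?_ ?_
    · calc S.res y (S.p y ⊓ S.p x) inf_le_left
          = S.res y (S.p m) hmy.1 :=
            S.toPresheafOfSets.res_eq_of_eq ((inf_comm (S.p y) (S.p x)).trans hpm.symm) _ _
        _ = m := hmy.2.symm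
        _ = S.res (S.bullet x y) (S.p m) hmj.1 := hmj.2
        _ = S.res (S.bullet x y) (S.p y ⊓ S.p x)
              ((hpm.trans (inf_comm (S.p x) (S.p y))) ▸ hmj.1) :=
            S.toPresheafOfSets.res_eq_of_eq (hpm.trans (inf_comm (S.p x) (S.p y))) _ _
        _ = S.res (S.res (S.bullet x y) (S.p y) hpy) (S.p y ⊓ S.p x)
              (by rw [S.p_res]; exact inf_le_left) :=
            (S.res_comp (S.bullet x y) (S.p y) (S.p y ⊓ S.p x) hpy inf_le_left _ _).symm
    · calc S.res y (S.p y \ S.p x) sdiff_le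
          = S.minus y x := rfl
        _ = S.res (S.bullet x y) (S.p (S.minus y x)) hyx.1 := hyx.2
        _ = S.res (S.bullet x y) (S.p y \ S.p x) ((S.p_minus y x) ▸ hyx.1) :=
            S.toPresheafOfSets.res_eq_of_eq (S.p_minus y x) _ _
        _ = S.res (S.res (S.bullet x y) (S.p y) hpy) (S.p y \ S.p x)
              (by rw [S.p_res]; exact sdiff_le) :=
            (S.res_comp (S.bullet x y) (S.p y) (S.p y \ S.p x) hpy sdiff_le _ _).symm
  have hy : S.le y (S.bullet x y) := by
    have hr := S.toPresheafOfSets.res_le (S.bullet x y) (S.p y) hpy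
    rwa [← key] at hr
  refine ⟨hx, hy, ?_⟩
  intro z hxz hyz
  exact hj.2.2 z hxz
    (S.toPresheafOfSets.le_trans' (S.toPresheafOfSets.res_le y (S.p y \ S.p x) sdiff_le) hyz)

theorem compat_iff_bullet (x y : S.X) : S.Compatible x y ↔ S.bullet x y = S.bullet y x := by
  constructor
  · intro h
    have h1 := S.isJoin_bullet_of_compatible h
    have h2' := S.isJoin_bullet_of_compatible (S.toPresheafOfSets.compatible_symm h)
    have h2 : S.IsJoin (S.bullet y x) x y :=
      ⟨h2'.2.1, h2'.1, fun z hx hy => h2'.2.2 z hy hx⟩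
    exact S.toPresheafOfSets.isJoin_unique h1 h2
  · intro h
    have hjx : S.le x (S.bullet x y) := (S.isJoin_bullet x y).1
    have hjy : S.le y (S.bullet x y) := by
      rw [h]; exact (S.isJoin_bullet y x).1
    have hle : S.p x ⊓ S.p y ≤ S.p (S.bullet x y) := inf_le_left.trans hjx.1
    refine ⟨S.res (S.bullet x y) (S.p x ⊓ S.p y) hle, ⟨?_, ?_, ?_⟩, S.p_res _ _ _⟩
    · have e : S.res (S.bullet x y) (S.p x ⊓ S.p y) hle
          = S.res x (S.p x ⊓ S.p y) inf_le_left := by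
        calc S.res (S.bullet x y) (S.p x ⊓ S.p y) hle
            = S.res (S.res (S.bullet x y) (S.p x) hjx.1) (S.p x ⊓ S.p y)
                (by rw [S.p_res]; exact inf_le_left) :=
              (S.res_comp (S.bullet x y) (S.p x) (S.p x ⊓ S.p y) hjx.1 inf_le_left _ _).symm
          _ = S.res x (S.p x ⊓ S.p y) inf_le_left :=
              (S.toPresheafOfSets.res_congr_base hjx.2 _ _ _).symm
      rw [e]; exact S.toPresheafOfSets.res_le x _ _
    · have e : S.res (S.bullet x y) (S.p x ⊓ S.p y) hle
          = S.res y (S.p x ⊓ S.p y) inf_le_right := by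
        calc S.res (S.bullet x y) (S.p x ⊓ S.p y) hle
            = S.res (S.res (S.bullet x y) (S.p y) hjy.1) (S.p x ⊓ S.p y)
                (by rw [S.p_res]; exact inf_le_right) :=
              (S.res_comp (S.bullet x y) (S.p y) (S.p x ⊓ S.p y) hjy.1 inf_le_right _ _).symm
          _ = S.res y (S.p x ⊓ S.p y) inf_le_right :=
              (S.toPresheafOfSets.res_congr_base hjy.2 _ _ _).symm
      rw [e]; exact S.toPresheafOfSets.res_le y _ _
    · intro z hzx hzy
      exact S.toPresheafOfSets.le_res (S.toPresheafOfSets.le_trans' hzx hjx)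
        (le_inf hzx.1 hzy.1) hle

end BooleanSet

/-- In a Boolean set with `x ∘ y = y|^{p y}_{p x ⊓ p y}` and `x • y = x ∨ (y \ x)`,
the conditions `x ∼ y`, `x ∘ y = y ∘ x` and `x • y = y • x` are equivalent. -/
theorem booleanSet_compatibility_tfae {B : Type*} [GeneralizedBooleanAlgebra B]
    (S : BooleanSet B) :
    ∃ bullet : S.X → S.X → S.X,
      (∀ x y, S.IsJoin (bullet x y) x (S.minus y x)) ∧
      (∀ x y : S.X,
        (S.Compatible x y ↔ S.circ x y = S.circ y x) ∧
        (S.Compatible x y ↔ bullet x y = bullet y x)) := by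
  exact ⟨S.bullet, S.isJoin_bullet,
    fun x y => ⟨S.compat_iff_circ x y, S.compat_iff_bullet x y⟩⟩
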